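/- arXiv:2210.03776 — 6 statements merged into one kernel-verified Lean document; each statement's English description precedes it below -/
import Mathlib

section
/- Let X and Y be Polish spaces and c : X × Y → ℝ a continuous non-negative cost function. Let γ be an optimal coupling between probability measures μ on X and ν on Y with finite transport cost ∫ c dγ < ∞. Let ω be a probability measure on X × Y that is absolutely continuous with respect to γ and has finite transport cost ∫ c dω < ∞. Then ω is an optimal coupling between its marginals η := (proj_X)_# ω and ζ := (proj_Y)_# ω. -/
open MeasureTheory ProbabilityTheory Set
open scoped ENNReal

noncomputable section

/-- The transport cost of a plan `γ` for the cost function `c`. -/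
def transportCost {X Y : Type*} [MeasurableSpace X] [MeasurableSpace Y]
    (c : X × Y → ℝ) (γ : Measure (X × Y)) : ℝ≥0∞ :=
  ∫⁻ p, ENNReal.ofReal (c p) ∂γ

/-- `γ` is a coupling of `μ` and `ν`: its marginals are `μ` and `ν`. -/
def IsCoupling {X Y : Type*} [MeasurableSpace X] [MeasurableSpace Y]
    (γ : Measure (X × Y)) (μ : Measure X) (ν : Measure Y) : Prop :=
  γ.map Prod.fst = μ ∧ γ.map Prod.snd = ν

/-- `γ` is an optimal coupling of `μ` and `ν` for the cost `c`: it is a coupling and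
attains the infimum of the transport cost over all couplings of `μ` and `ν`. -/
def IsOptimalCoupling {X Y : Type*} [MeasurableSpace X] [MeasurableSpace Y]
    (c : X × Y → ℝ) (γ : Measure (X × Y)) (μ : Measure X) (ν : Measure Y) : Prop :=
  IsCoupling γ μ ν ∧
    ∀ γ' : Measure (X × Y), IsCoupling γ' μ ν → transportCost c γ ≤ transportCost c γ'

/-!
The support of an optimal coupling `γ` of finite cost is `c`-cyclically monotone: if the points
`q 0, …, q n` of the support could be cyclically rematched more cheaply, moving a little mass from
small rectangles around the `q i` onto products of the marginals of neighbouring rectangles would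
keep the marginals of `γ` and lower its cost. As `ω ≪ γ`, the plan `ω` is concentrated on this
support. On a `c`-cyclically monotone set `Γ`, Rockafellar's construction (an infimum over chains
in `Γ`) and its `c`-transform give potentials `φ, ψ` with `φ x + ψ y ≤ c (x, y)` everywhere and
equality on `Γ`. Integrating `φ ⊕ ψ` against `ω` and against any plan with the same marginals
(after truncation) shows that no such plan is cheaper than `ω`.
-/

open Filter Topology

lemma ENNReal.sum_le_sum_of_ofReal_le_of_le_ofReal {ι : Type*} {s : Finset ι} {x y : ι → ℝ≥0∞}
    {a b : ι → ℝ} (hb : ∀ i ∈ s, 0 ≤ b i) (hx : ∀ i ∈ s, ENNReal.ofReal (a i) ≤ x i)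
    (hy : ∀ i ∈ s, y i ≤ ENNReal.ofReal (b i)) (hxy : ∑ i ∈ s, x i ≤ ∑ i ∈ s, y i) :
    ∑ i ∈ s, a i ≤ ∑ i ∈ s, b i := by
  have hy_fin (i) (hi : i ∈ s) : y i ≠ ∞ := ne_top_of_le_ne_top ENNReal.ofReal_ne_top (hy i hi)
  have hsum_fin : ∑ i ∈ s, y i ≠ ∞ := ENNReal.sum_ne_top.2 hy_fin
  have hx_fin (i) (hi : i ∈ s) : x i ≠ ∞ :=
    ne_top_of_le_ne_top (ne_top_of_le_ne_top hsum_fin hxy) (Finset.single_le_sum (by simp) hi)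
  have hxy' := ENNReal.toReal_mono hsum_fin hxy
  rw [ENNReal.toReal_sum hx_fin, ENNReal.toReal_sum hy_fin] at hxy'
  calc ∑ i ∈ s, a i ≤ ∑ i ∈ s, (x i).toReal := Finset.sum_le_sum fun i hi =>
        (ENNReal.ofReal_le_iff_le_toReal (hx_fin i hi)).1 (hx i hi)
    _ ≤ ∑ i ∈ s, (y i).toReal := hxy'
    _ ≤ ∑ i ∈ s, b i := Finset.sum_le_sum fun i hi =>
        ENNReal.toReal_le_of_le_ofReal (hb i hi) (hy i hi)

section TransportCost

variable {X Y : Type*} [MeasurableSpace X] [MeasurableSpace Y] (c : X × Y → ℝ)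

lemma transportCost_add (ρ ρ' : Measure (X × Y)) :
    transportCost c (ρ + ρ') = transportCost c ρ + transportCost c ρ' :=
  lintegral_add_measure _ _ _

lemma transportCost_smul (ε : ℝ≥0∞) (ρ : Measure (X × Y)) :
    transportCost c (ε • ρ) = ε * transportCost c ρ :=
  lintegral_smul_measure _ _

lemma transportCost_sum {ι : Type*} (s : Finset ι) (ρ : ι → Measure (X × Y)) :
    transportCost c (∑ i ∈ s, ρ i) = ∑ i ∈ s, transportCost c (ρ i) :=
  lintegral_finsetSum_measure _ _ _

lemma transportCost_mono {ρ ρ' : Measure (X × Y)} (h : ρ ≤ ρ') :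
    transportCost c ρ ≤ transportCost c ρ' :=
  lintegral_mono' h le_rfl

variable {c}

lemma ofReal_le_transportCost {ρ : Measure (X × Y)} [IsProbabilityMeasure ρ] {a : ℝ}
    (h : ∀ᵐ p ∂ρ, a ≤ c p) : ENNReal.ofReal a ≤ transportCost c ρ := by
  simpa [transportCost] using
    lintegral_mono_ae (μ := ρ) (h.mono fun p hp => ENNReal.ofReal_le_ofReal hp)

lemma transportCost_le_ofReal {ρ : Measure (X × Y)} [IsProbabilityMeasure ρ] {b : ℝ}
    (h : ∀ᵐ p ∂ρ, c p ≤ b) : transportCost c ρ ≤ ENNReal.ofReal b := by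
  simpa [transportCost] using
    lintegral_mono_ae (μ := ρ) (h.mono fun p hp => ENNReal.ofReal_le_ofReal hp)

end TransportCost

section CyclicExchange

variable {X Y : Type*} [MeasurableSpace X] [MeasurableSpace Y]

lemma IsCoupling.sub_add {γ S T : Measure (X × Y)} {μ : Measure X} {ν : Measure Y}
    [IsFiniteMeasure S] (hγ : IsCoupling γ μ ν) (hS : S ≤ γ)
    (hfst : T.map Prod.fst = S.map Prod.fst) (hsnd : T.map Prod.snd = S.map Prod.snd) :
    IsCoupling (γ - S + T) μ ν := by
  constructor
  · rw [Measure.map_add _ _ measurable_fst, hfst, ← Measure.map_add _ _ measurable_fst,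
      Measure.sub_add_cancel_of_le hS, hγ.1]
  · rw [Measure.map_add _ _ measurable_snd, hsnd, ← Measure.map_add _ _ measurable_snd,
      Measure.sub_add_cancel_of_le hS, hγ.2]

def cyclicExchange {n : ℕ} (P : Fin (n + 1) → Measure (X × Y)) (i : Fin (n + 1)) :
    Measure (X × Y) :=
  ((P (i + 1)).map Prod.fst).prod ((P i).map Prod.snd)

variable {n : ℕ} (P : Fin (n + 1) → Measure (X × Y))

lemma ae_mem_prod_cyclicExchange {U : Set X} {V : Set Y} (hU : MeasurableSet U)
    (hV : MeasurableSet V) (i : Fin (n + 1)) (hPU : ∀ᵐ p ∂P (i + 1), p.1 ∈ U)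
    (hPV : ∀ᵐ p ∂P i, p.2 ∈ V) : ∀ᵐ p ∂cyclicExchange P i, p ∈ U ×ˢ V := by
  filter_upwards [Measure.quasiMeasurePreserving_fst.ae
      ((ae_map_iff measurable_fst.aemeasurable hU).2 hPU),
    Measure.quasiMeasurePreserving_snd.ae ((ae_map_iff measurable_snd.aemeasurable hV).2 hPV)]
    with p hpU hpV
  exact ⟨hpU, hpV⟩

variable [∀ i, IsProbabilityMeasure (P i)]

instance (i : Fin (n + 1)) : IsProbabilityMeasure (cyclicExchange P i) := by
  have := Measure.isProbabilityMeasure_map (μ := P (i + 1)) measurable_fst.aemeasurable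
  have := Measure.isProbabilityMeasure_map (μ := P i) measurable_snd.aemeasurable
  unfold cyclicExchange
  infer_instance

lemma map_fst_sum_cyclicExchange :
    (∑ i, cyclicExchange P i).map Prod.fst = (∑ i, P i).map Prod.fst := by
  simp only [Measure.map_finset_sum' measurable_fst.aemeasurable, cyclicExchange]
  simp only [Measure.map_fst_prod, Measure.map_apply measurable_snd .univ, preimage_univ,
    measure_univ, one_smul]
  exact Equiv.sum_comp (Equiv.addRight 1) fun i => (P i).map Prod.fst

lemma map_snd_sum_cyclicExchange :
    (∑ i, cyclicExchange P i).map Prod.snd = (∑ i, P i).map Prod.snd := by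
  simp only [Measure.map_finset_sum' measurable_snd.aemeasurable, cyclicExchange]
  simp only [Measure.map_snd_prod, Measure.map_apply measurable_fst .univ, preimage_univ,
    measure_univ, one_smul]

variable {c : X × Y → ℝ}

/-- Moving the mass `ε • P i` of an optimal coupling onto `ε • cyclicExchange P i` keeps the
marginals, so it cannot lower the cost. -/
lemma IsOptimalCoupling.sum_transportCost_le_cyclicExchange {γ : Measure (X × Y)}
    {μ : Measure X} {ν : Measure Y} (hγ : IsOptimalCoupling c γ μ ν)
    (hγfin : transportCost c γ ≠ ∞) {ε : ℝ≥0∞} (hε₀ : ε ≠ 0) (hε : ε ≠ ∞)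
    (hP : ε • ∑ i, P i ≤ γ) :
    ∑ i, transportCost c (P i) ≤ ∑ i, transportCost c (cyclicExchange P i) := by
  set S := ε • ∑ i, P i
  set T := ε • ∑ i, cyclicExchange P i
  have : IsFiniteMeasure S := ⟨by simp [S, ENNReal.mul_lt_top, hε.lt_top]⟩
  have hT : IsCoupling (γ - S + T) μ ν :=
    hγ.1.sub_add hP (by simp only [T, S, Measure.map_smul, map_fst_sum_cyclicExchange])
      (by simp only [T, S, Measure.map_smul, map_snd_sum_cyclicExchange])
  have hrest : transportCost c (γ - S) ≠ ∞ :=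
    ne_top_of_le_ne_top hγfin (transportCost_mono c Measure.sub_le)
  have key : transportCost c (γ - S) + transportCost c S
      ≤ transportCost c (γ - S) + transportCost c T := by
    rw [← transportCost_add, ← transportCost_add, Measure.sub_add_cancel_of_le hP]
    exact hγ.2 _ hT
  rwa [ENNReal.add_le_add_iff_left hrest, transportCost_smul, transportCost_smul,
    transportCost_sum, transportCost_sum, ENNReal.mul_le_mul_iff_right hε₀ hε] at key

end CyclicExchange

lemma exists_smul_sum_cond_le {α ι : Type*} [MeasurableSpace α] [Fintype ι] [Nonempty ι]
    (γ : Measure α) [IsFiniteMeasure γ] (R : ι → Set α) (hR : ∀ i, γ (R i) ≠ 0) :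
    ∃ ε : ℝ≥0∞, ε ≠ 0 ∧ ε ≠ ∞ ∧ ε • ∑ i, γ[|R i] ≤ γ := by
  set m := Finset.univ.inf' Finset.univ_nonempty fun i => γ (R i)
  have hm : m ≠ 0 := by
    obtain ⟨i, -, hi⟩ := Finset.exists_mem_eq_inf' Finset.univ_nonempty fun i => γ (R i)
    simpa [m, hi] using hR i
  have hm_le (i) : m ≤ γ (R i) := Finset.inf'_le _ (Finset.mem_univ i)
  have hm_top : m ≠ ∞ := ne_top_of_le_ne_top (measure_ne_top γ _) (hm_le (Classical.arbitrary ι))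
  have hcard : (Fintype.card ι : ℝ≥0∞) ≠ 0 := by simp
  refine ⟨m / Fintype.card ι, by simp [hm], by simp [ENNReal.div_eq_top, hm_top], ?_⟩
  calc (m / Fintype.card ι) • ∑ i, γ[|R i]
      ≤ ∑ _i : ι, (Fintype.card ι : ℝ≥0∞)⁻¹ • γ := by
        rw [Finset.smul_sum]
        refine Finset.sum_le_sum fun i _ => ?_
        rw [ProbabilityTheory.cond, smul_smul, div_eq_mul_inv, mul_right_comm, ← div_eq_mul_inv]
        calc (m / γ (R i) * (Fintype.card ι : ℝ≥0∞)⁻¹) • γ.restrict (R i)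
            ≤ (1 * (Fintype.card ι : ℝ≥0∞)⁻¹) • γ := by
              gcongr
              · exact ENNReal.div_le_of_le_mul (by simpa using hm_le i)
              · exact Measure.restrict_le_self
          _ = (Fintype.card ι : ℝ≥0∞)⁻¹ • γ := by rw [one_mul]
    _ = γ := by
        rw [Finset.sum_const, Finset.card_univ, ← Nat.cast_smul_eq_nsmul ℝ≥0∞, smul_smul,
          ENNReal.mul_inv_cancel hcard (by simp), one_smul]

lemma exists_isOpen_rectangles_cyclic {X Y : Type*} [TopologicalSpace X] [TopologicalSpace Y]
    {c : X × Y → ℝ} (hc : Continuous c) {n : ℕ} (q : Fin (n + 1) → X × Y) {δ : ℝ} (hδ : 0 < δ) :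
    ∃ (U : Fin (n + 1) → Set X) (V : Fin (n + 1) → Set Y),
      (∀ i, IsOpen (U i) ∧ IsOpen (V i) ∧ q i ∈ U i ×ˢ V i) ∧
      (∀ i, ∀ p ∈ U i ×ˢ V i, c (q i) - δ < c p) ∧
      ∀ i, ∀ p ∈ U (i + 1) ×ˢ V i, c p < c ((q (i + 1)).1, (q i).2) + δ := by
  have hlow (i) : {p | c (q i) - δ < c p} ∈ 𝓝 ((q i).1, (q i).2) :=
    (isOpen_lt continuous_const hc).mem_nhds (by simpa using hδ)
  have hup (i) : {p | c p < c ((q (i + 1)).1, (q i).2) + δ} ∈ 𝓝 ((q (i + 1)).1, (q i).2) :=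
    (isOpen_lt hc continuous_const).mem_nhds (by simpa using hδ)
  choose U₁ V₁ hU₁ hxU₁ hV₁ hyV₁ hUV₁ using fun i => mem_nhds_prod_iff'.1 (hlow i)
  choose U₂ V₂ hU₂ hxU₂ hV₂ hyV₂ hUV₂ using fun i => mem_nhds_prod_iff'.1 (hup i)
  refine ⟨fun i => U₁ i ∩ U₂ (i - 1), fun i => V₁ i ∩ V₂ i, fun i => ?_, fun i p hp => ?_,
    fun i p hp => ?_⟩
  · refine ⟨(hU₁ i).inter (hU₂ _), (hV₁ i).inter (hV₂ i), ⟨hxU₁ i, ?_⟩, hyV₁ i, hyV₂ i⟩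
    simpa using hxU₂ (i - 1)
  · exact hUV₁ i (mk_mem_prod hp.1.1 hp.2.1)
  · exact hUV₂ i (mk_mem_prod (by simpa using hp.1.2) hp.2.2)

def IsCyclicallyMonotone {X Y : Type*} (c : X × Y → ℝ) (Γ : Set (X × Y)) : Prop :=
  ∀ (n : ℕ) (q : Fin (n + 1) → X × Y), (∀ i, q i ∈ Γ) →
    ∑ i, c (q i) ≤ ∑ i, c ((q (i + 1)).1, (q i).2)

theorem IsOptimalCoupling.isCyclicallyMonotone_support {X Y : Type*} [TopologicalSpace X]
    [MeasurableSpace X] [OpensMeasurableSpace X] [TopologicalSpace Y] [MeasurableSpace Y]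
    [OpensMeasurableSpace Y] {c : X × Y → ℝ} {γ : Measure (X × Y)} [IsFiniteMeasure γ]
    {μ : Measure X} {ν : Measure Y} (hc : Continuous c) (hc_nonneg : ∀ p, 0 ≤ c p)
    (hγ : IsOptimalCoupling c γ μ ν) (hγfin : transportCost c γ ≠ ∞) :
    IsCyclicallyMonotone c γ.support := by
  intro n q hq
  refine le_of_forall_pos_le_add fun η hη => ?_
  set δ := η / (2 * (n + 1))
  have hδ : 0 < δ := by positivity
  obtain ⟨U, V, hUV, hlow, hup⟩ := exists_isOpen_rectangles_cyclic hc q hδ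
  have hUm (i) : MeasurableSet (U i) := (hUV i).1.measurableSet
  have hVm (i) : MeasurableSet (V i) := (hUV i).2.1.measurableSet
  set R := fun i => U i ×ˢ V i
  have hR (i) : γ (R i) ≠ 0 := ((Measure.mem_support_iff_forall _).1 (hq i) _
    (((hUV i).1.prod (hUV i).2.1).mem_nhds (hUV i).2.2)).ne'
  set P := fun i => γ[|R i]
  have : ∀ i, IsProbabilityMeasure (P i) := fun i => cond_isProbabilityMeasure (hR i)
  have hPR (i) : ∀ᵐ p ∂P i, p ∈ R i := ae_cond_mem ((hUm i).prod (hVm i))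
  obtain ⟨ε, hε₀, hε, hle⟩ := exists_smul_sum_cond_le γ R hR
  have hP (i) : ENNReal.ofReal (c (q i) - δ) ≤ transportCost c (P i) :=
    ofReal_le_transportCost ((hPR i).mono fun p hp => (hlow i p hp).le)
  have hQ (i) : transportCost c (cyclicExchange P i)
      ≤ ENNReal.ofReal (c ((q (i + 1)).1, (q i).2) + δ) :=
    transportCost_le_ofReal <| (ae_mem_prod_cyclicExchange P (hUm _) (hVm i) i
      ((hPR _).mono fun _ hp => hp.1) ((hPR i).mono fun _ hp => hp.2)).mono
        fun p hp => (hup i p hp).le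
  have hsum := ENNReal.sum_le_sum_of_ofReal_le_of_le_ofReal
    (fun i _ => add_nonneg (hc_nonneg _) hδ.le) (fun i _ => hP i) (fun i _ => hQ i)
    (hγ.sum_transportCost_le_cyclicExchange P hγfin hε₀ hε hle)
  simp only [Finset.sum_sub_distrib, Finset.sum_add_distrib, Finset.sum_const, Finset.card_univ,
    Fintype.card_fin, nsmul_eq_mul] at hsum
  have hnδ : ((n + 1 : ℕ) : ℝ) * δ = η / 2 := by
    simp only [δ]; field_simp; push_cast; ring
  linarith

section Potentials

variable {X Y : Type*} (c : X × Y → ℝ)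

def chainValue {n : ℕ} (q : Fin (n + 1) → X × Y) (x : X) : ℝ :=
  ∑ j : Fin n, (c ((q j.succ).1, (q j.castSucc).2) - c (q j.castSucc))
    + (c (x, (q (Fin.last n)).2) - c (q (Fin.last n)))

lemma chainValue_snoc {n : ℕ} (q : Fin (n + 1) → X × Y) (z : X × Y) (x : X) :
    chainValue c (Fin.snoc q z : Fin (n + 2) → X × Y) x
      = chainValue c q z.1 + (c (x, z.2) - c z) := by
  simp only [chainValue, Fin.sum_univ_castSucc (n := n), Fin.succ_castSucc, Fin.snoc_castSucc,
    Fin.snoc_last, Fin.succ_last]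

lemma chainValue_self {n : ℕ} (q : Fin (n + 1) → X × Y) :
    chainValue c q (q 0).1 = ∑ i, (c ((q (i + 1)).1, (q i).2) - c (q i)) := by
  rw [chainValue, Fin.sum_univ_castSucc (fun i => c ((q (i + 1)).1, (q i).2) - c (q i)),
    Fin.last_add_one]
  simp only [Fin.coeSucc_eq_succ]

lemma IsCyclicallyMonotone.chainValue_self_nonneg {Γ : Set (X × Y)} (hΓ : IsCyclicallyMonotone c Γ)
    {n : ℕ} {q : Fin (n + 1) → X × Y} (hq : ∀ i, q i ∈ Γ) : 0 ≤ chainValue c q (q 0).1 := by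
  rw [chainValue_self, Finset.sum_sub_distrib, sub_nonneg]
  exact hΓ n q hq

def rockafellarPotential (Γ : Set (X × Y)) (p₀ : X × Y) (x : X) : EReal :=
  ⨅ (n : ℕ) (q : Fin (n + 1) → X × Y) (_ : q 0 = p₀) (_ : ∀ i, q i ∈ Γ), (chainValue c q x : EReal)

def cTransform (φ : X → EReal) (y : Y) : EReal :=
  ⨅ x, ((c (x, y) : EReal) - φ x)

variable {c} {Γ : Set (X × Y)} {p₀ : X × Y}

lemma rockafellarPotential_le_chainValue {n : ℕ} {q : Fin (n + 1) → X × Y} (hq₀ : q 0 = p₀)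
    (hq : ∀ i, q i ∈ Γ) (x : X) : rockafellarPotential c Γ p₀ x ≤ chainValue c q x :=
  (iInf_le _ n).trans <| (iInf_le _ q).trans <| (iInf_le _ hq₀).trans <| iInf_le _ hq

lemma rockafellarPotential_ne_top (hp₀ : p₀ ∈ Γ) (x : X) : rockafellarPotential c Γ p₀ x ≠ ⊤ :=
  ne_top_of_le_ne_top (EReal.coe_ne_top _)
    (rockafellarPotential_le_chainValue (q := fun _ : Fin 1 => p₀) rfl (fun _ => hp₀) x)

lemma rockafellarPotential_le_add {z : X × Y} (hz : z ∈ Γ) (x : X) :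
    rockafellarPotential c Γ p₀ x
      ≤ rockafellarPotential c Γ p₀ z.1 + ((c (x, z.2) - c z : ℝ) : EReal) := by
  rw [← EReal.sub_le_iff_le_add (.inl (EReal.coe_ne_bot _)) (.inl (EReal.coe_ne_top _))]
  refine le_iInf fun n => le_iInf fun q => le_iInf fun hq₀ => le_iInf fun hq => ?_
  rw [EReal.sub_le_iff_le_add (.inl (EReal.coe_ne_bot _)) (.inl (EReal.coe_ne_top _)),
    ← EReal.coe_add, ← chainValue_snoc]
  refine rockafellarPotential_le_chainValue ?_ ?_ x
  · simpa using hq₀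
  · exact Fin.lastCases (by simpa using hz) fun i => by simpa using hq i

lemma IsCyclicallyMonotone.le_rockafellarPotential (hΓ : IsCyclicallyMonotone c Γ) {z : X × Y}
    (hz : z ∈ Γ) : ((c z - c (p₀.1, z.2) : ℝ) : EReal) ≤ rockafellarPotential c Γ p₀ z.1 := by
  refine le_iInf fun n => le_iInf fun q => le_iInf fun hq₀ => le_iInf fun hq => ?_
  have hsnoc : ∀ i, (Fin.snoc q z : Fin (n + 2) → X × Y) i ∈ Γ :=
    Fin.lastCases (by simpa using hz) fun i => by simpa using hq i
  have := hΓ.chainValue_self_nonneg c hsnoc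
  rw [show (Fin.snoc q z : Fin (n + 2) → X × Y) 0 = p₀ by simpa using hq₀, chainValue_snoc] at this
  exact EReal.coe_le_coe_iff.2 (by linarith)

lemma add_cTransform_le (φ : X → EReal) (x : X) (y : Y) : φ x + cTransform c φ y ≤ c (x, y) :=
  calc φ x + cTransform c φ y ≤ φ x + ((c (x, y) : EReal) - φ x) := by
        gcongr; exact iInf_le _ x
    _ ≤ c (x, y) := by
      induction φ x using EReal.rec with
      | bot => simp
      | top => simp
      | coe a => rw [← EReal.coe_sub, ← EReal.coe_add, add_sub_cancel]

lemma IsCyclicallyMonotone.rockafellarPotential_add_cTransform (hΓ : IsCyclicallyMonotone c Γ)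
    (hp₀ : p₀ ∈ Γ) {z : X × Y} (hz : z ∈ Γ) :
    rockafellarPotential c Γ p₀ z.1 + cTransform c (rockafellarPotential c Γ p₀) z.2 = c z := by
  set φ := rockafellarPotential c Γ p₀
  refine le_antisymm (add_cTransform_le φ z.1 z.2) ?_
  obtain ⟨a, ha⟩ : ∃ a : ℝ, φ z.1 = a :=
    ⟨_, (EReal.coe_toReal (rockafellarPotential_ne_top hp₀ _)
      (ne_bot_of_le_ne_bot (EReal.coe_ne_bot _) (hΓ.le_rockafellarPotential hz))).symm⟩
  have hψ : ((c z - a : ℝ) : EReal) ≤ cTransform c φ z.2 := by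
    refine le_iInf fun x => ?_
    have h : φ x ≤ φ z.1 + ((c (x, z.2) - c z : ℝ) : EReal) := rockafellarPotential_le_add hz x
    rw [ha, ← EReal.coe_add] at h
    generalize φ x = b at h ⊢
    induction b using EReal.rec with
    | bot => simp
    | top => exact absurd h (not_le.2 (EReal.coe_lt_top _))
    | coe b =>
      rw [← EReal.coe_sub, EReal.coe_le_coe_iff]
      rw [EReal.coe_le_coe_iff] at h
      linarith
  calc (c z : EReal) = a + ((c z - a : ℝ) : EReal) := by rw [← EReal.coe_add, add_sub_cancel]
    _ ≤ φ z.1 + cTransform c φ z.2 := by rw [ha]; gcongr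

lemma measurable_rockafellarPotential [TopologicalSpace X] [MeasurableSpace X]
    [OpensMeasurableSpace X] [TopologicalSpace Y] (hc : Continuous c) (Γ : Set (X × Y))
    (p₀ : X × Y) :
    Measurable (rockafellarPotential c Γ p₀) := by
  refine UpperSemicontinuous.measurable <| upperSemicontinuous_iInf fun n =>
    upperSemicontinuous_iInf fun q => upperSemicontinuous_iInf fun _ =>
    upperSemicontinuous_iInf fun _ => Continuous.upperSemicontinuous ?_
  exact continuous_coe_real_ereal.comp <| continuous_const.add <|
    (hc.comp (continuous_id.prodMk continuous_const)).sub continuous_const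

lemma measurable_cTransform [TopologicalSpace X] [TopologicalSpace Y] [MeasurableSpace Y]
    [OpensMeasurableSpace Y] (hc : Continuous c) (φ : X → EReal) :
    Measurable (cTransform c φ) := by
  refine UpperSemicontinuous.measurable <| upperSemicontinuous_iInf fun x =>
    Continuous.upperSemicontinuous ?_
  induction φ x using EReal.rec with
  | bot => simpa using continuous_const
  | top => simpa using continuous_const
  | coe a =>
    simp_rw [← EReal.coe_sub]
    exact continuous_coe_real_ereal.comp <|
      (hc.comp (continuous_const.prodMk continuous_id)).sub continuous_const

end Potentials

section Duality

def truncToReal (n : ℝ) (t : EReal) : ℝ := (max (-(n : EReal)) (min (n : EReal) t)).toReal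
@[simp] lemma truncToReal_coe (n a : ℝ) : truncToReal n a = max (-n) (min n a) := by
  rw [truncToReal, ← EReal.coe_neg, ← EReal.coe_strictMono.monotone.map_min,
    ← EReal.coe_strictMono.monotone.map_max, EReal.toReal_coe]

@[simp] lemma truncToReal_bot (n : ℝ) : truncToReal n ⊥ = -n := by
  simp [truncToReal, ← EReal.coe_neg]

lemma truncToReal_top {n : ℝ} (hn : 0 ≤ n) : truncToReal n ⊤ = n := by
  simp [truncToReal, ← EReal.coe_neg, hn]

lemma abs_truncToReal_le {n : ℝ} (hn : 0 ≤ n) (t : EReal) : |truncToReal n t| ≤ n := by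
  induction t using EReal.rec with
  | bot => simp [abs_of_nonneg hn]
  | top => simp [truncToReal_top hn, abs_of_nonneg hn]
  | coe a => simp only [truncToReal_coe, abs_le]; constructor <;> simp [hn]

lemma truncToReal_coe_of_abs_le {n a : ℝ} (h : |a| ≤ n) : truncToReal n a = a := by
  rw [abs_le] at h
  simp [h.1, h.2]

lemma truncToReal_add_le {n : ℝ} (hn : 0 ≤ n) {a b : EReal} {r : ℝ} (h : a + b ≤ r) (hr : 0 ≤ r) :
    truncToReal n a + truncToReal n b ≤ r := by
  induction a using EReal.rec <;> induction b using EReal.rec <;>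
    simp_all [truncToReal_top, max_def, min_def] <;> (try norm_cast at h) <;> (try split_ifs) <;>
    linarith

lemma truncToReal_add_nonneg {n : ℝ} (hn : 0 ≤ n) {a b : EReal} {r : ℝ} (h : a + b = r)
    (hr : 0 ≤ r) :
    0 ≤ truncToReal n a + truncToReal n b := by
  induction a using EReal.rec <;> induction b using EReal.rec <;>
    simp_all [max_def, min_def]
  norm_cast at h
  split_ifs <;> linarith

lemma measurable_truncToReal (n : ℝ) : Measurable (truncToReal n) :=
  (measurable_const.max (measurable_const.min measurable_id)).ereal_toReal

lemma tendsto_truncToReal_coe (a : ℝ) :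
    Tendsto (fun k : ℕ => truncToReal k a) atTop (𝓝 a) :=
  tendsto_const_nhds.congr' <| (eventually_ge_atTop ⌈|a|⌉₊).mono fun _ hk =>
    (truncToReal_coe_of_abs_le (Nat.ceil_le.1 hk)).symm

lemma tendsto_truncToReal_add {a b : EReal} {r : ℝ} (h : a + b = r) :
    Tendsto (fun k : ℕ => truncToReal k a + truncToReal k b) atTop (𝓝 r) := by
  induction a using EReal.rec <;> induction b using EReal.rec <;> try simp at h
  case coe.coe a b =>
    rw [← EReal.coe_add, EReal.coe_eq_coe_iff] at h
    exact h ▸ (tendsto_truncToReal_coe a).add (tendsto_truncToReal_coe b)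

lemma Measurable.integrable_truncToReal {Z : Type*} [MeasurableSpace Z] {ρ : Measure Z}
    [IsFiniteMeasure ρ] {g : Z → EReal} (hg : Measurable g) {n : ℝ} (hn : 0 ≤ n) :
    Integrable (fun z => truncToReal n (g z)) ρ :=
  .of_bound ((measurable_truncToReal n).comp hg).aestronglyMeasurable n
    (.of_forall fun _ => (Real.norm_eq_abs _).trans_le (abs_truncToReal_le hn _))

lemma ofReal_integral_le_lintegral_ofReal {α : Type*} [MeasurableSpace α] {μ : Measure α}
    (f : α → ℝ) : ENNReal.ofReal (∫ a, f a ∂μ) ≤ ∫⁻ a, ENNReal.ofReal (f a) ∂μ := by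
  by_cases hf : Integrable f μ
  · rw [integral_eq_lintegral_pos_part_sub_lintegral_neg_part hf]
    exact (ENNReal.ofReal_le_ofReal (sub_le_self _ ENNReal.toReal_nonneg)).trans
      ENNReal.ofReal_toReal_le
  · simp [integral_undef hf]

variable {X Y : Type*} [MeasurableSpace X] [MeasurableSpace Y]

lemma integral_comp_fst_add_comp_snd_eq {ω π : Measure (X × Y)}
    (hfst : π.map Prod.fst = ω.map Prod.fst) (hsnd : π.map Prod.snd = ω.map Prod.snd)
    {F : X → ℝ} {G : Y → ℝ} (hF : Integrable F (ω.map Prod.fst))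
    (hG : Integrable G (ω.map Prod.snd)) :
    ∫ p, F p.1 + G p.2 ∂π = ∫ p, F p.1 + G p.2 ∂ω := by
  have key (ρ : Measure (X × Y)) (h₁ : ρ.map Prod.fst = ω.map Prod.fst)
      (h₂ : ρ.map Prod.snd = ω.map Prod.snd) :
      ∫ p, F p.1 + G p.2 ∂ρ = ∫ x, F x ∂(ω.map Prod.fst) + ∫ y, G y ∂(ω.map Prod.snd) := by
    rw [← h₁] at hF ⊢
    rw [← h₂] at hG ⊢
    have hF' : Integrable (fun p : X × Y => F p.1) ρ := hF.comp_measurable measurable_fst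
    have hG' : Integrable (fun p : X × Y => G p.2) ρ := hG.comp_measurable measurable_snd
    rw [integral_add hF' hG',
      integral_map measurable_fst.aemeasurable hF.aestronglyMeasurable,
      integral_map measurable_snd.aemeasurable hG.aestronglyMeasurable]
  rw [key π hfst hsnd, key ω rfl rfl]

/-- The potentials may take the values `±∞` and need not be integrable, so they are clamped to
`[-k, k]`; as `c ≥ 0`, the clamped sums stay below `c`, are nonnegative where the potentials are
tight, and converge to `c` there (Fatou). -/
theorem transportCost_le_of_potentials {c : X × Y → ℝ} (hc_nonneg : ∀ p, 0 ≤ c p)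
    {φ : X → EReal} {ψ : Y → EReal} (hφ : Measurable φ) (hψ : Measurable ψ)
    (hle : ∀ x y, φ x + ψ y ≤ c (x, y)) {ω π : Measure (X × Y)} [IsFiniteMeasure ω]
    (heq : ∀ᵐ p ∂ω, φ p.1 + ψ p.2 = c p)
    (hfst : π.map Prod.fst = ω.map Prod.fst) (hsnd : π.map Prod.snd = ω.map Prod.snd) :
    transportCost c ω ≤ transportCost c π := by
  set f : ℕ → X × Y → ℝ := fun k p => truncToReal k (φ p.1) + truncToReal k (ψ p.2)
  have hf_meas (k : ℕ) : Measurable (f k) :=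
    ((measurable_truncToReal _).comp (hφ.comp measurable_fst)).add
      ((measurable_truncToReal _).comp (hψ.comp measurable_snd))
  have hF (k : ℕ) := hφ.integrable_truncToReal (ρ := ω.map Prod.fst) k.cast_nonneg
  have hG (k : ℕ) := hψ.integrable_truncToReal (ρ := ω.map Prod.snd) k.cast_nonneg
  have hlim : ∀ᵐ p ∂ω, Tendsto (fun k => f k p) atTop (𝓝 (c p)) :=
    heq.mono fun p hp => tendsto_truncToReal_add hp
  have hk (k : ℕ) : ∫⁻ p, ENNReal.ofReal (f k p) ∂ω ≤ transportCost c π := by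
    have hfk : Integrable (f k) ω :=
      ((hF k).comp_measurable measurable_fst).add ((hG k).comp_measurable measurable_snd)
    rw [← ofReal_integral_eq_lintegral_ofReal hfk
      (heq.mono fun p hp => truncToReal_add_nonneg k.cast_nonneg hp (hc_nonneg p)),
      ← integral_comp_fst_add_comp_snd_eq hfst hsnd (hF k) (hG k)]
    exact (ofReal_integral_le_lintegral_ofReal _).trans <| lintegral_mono fun p =>
      ENNReal.ofReal_le_ofReal (truncToReal_add_le k.cast_nonneg (hle p.1 p.2) (hc_nonneg p))
  calc transportCost c ω = ∫⁻ p, liminf (fun k => ENNReal.ofReal (f k p)) atTop ∂ω :=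
        lintegral_congr_ae <| hlim.mono fun p hp =>
          ((ENNReal.continuous_ofReal.tendsto _).comp hp).liminf_eq.symm
    _ ≤ liminf (fun k => ∫⁻ p, ENNReal.ofReal (f k p) ∂ω) atTop :=
        lintegral_liminf_le fun k => (hf_meas k).ennreal_ofReal
    _ ≤ transportCost c π := liminf_le_of_frequently_le' (.of_forall hk)

end Duality

theorem IsCyclicallyMonotone.transportCost_le {X Y : Type*} [TopologicalSpace X]
    [MeasurableSpace X] [OpensMeasurableSpace X] [TopologicalSpace Y] [MeasurableSpace Y]
    [OpensMeasurableSpace Y] {c : X × Y → ℝ} (hc : Continuous c) (hc_nonneg : ∀ p, 0 ≤ c p)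
    {Γ : Set (X × Y)} (hΓ : IsCyclicallyMonotone c Γ) {ω π : Measure (X × Y)} [IsFiniteMeasure ω]
    (hωΓ : ∀ᵐ p ∂ω, p ∈ Γ) (hfst : π.map Prod.fst = ω.map Prod.fst)
    (hsnd : π.map Prod.snd = ω.map Prod.snd) :
    transportCost c ω ≤ transportCost c π := by
  obtain rfl | ⟨p₀, hp₀⟩ := Γ.eq_empty_or_nonempty
  · simp at hωΓ
    simp [hωΓ, transportCost]
  exact transportCost_le_of_potentials hc_nonneg (measurable_rockafellarPotential hc Γ p₀)
    (measurable_cTransform hc _) (add_cTransform_le _)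
    (hωΓ.mono fun _ hp => hΓ.rockafellarPotential_add_cTransform hp₀ hp) hfst hsnd

theorem stmt0_general {X Y : Type*}
    [MeasurableSpace X] [TopologicalSpace X] [PolishSpace X] [BorelSpace X]
    [MeasurableSpace Y] [TopologicalSpace Y] [PolishSpace Y] [BorelSpace Y]
    (c : X × Y → ℝ) (hc_cont : Continuous c) (hc_nonneg : ∀ p, 0 ≤ c p)
    (μ : Measure X) (ν : Measure Y) [IsProbabilityMeasure μ]
    (γ : Measure (X × Y)) (hγ : IsOptimalCoupling c γ μ ν)
    (hγfin : transportCost c γ < ⊤)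
    (ω : Measure (X × Y)) [IsProbabilityMeasure ω]
    (hac : ω ≪ γ) :
    IsOptimalCoupling c ω (ω.map Prod.fst) (ω.map Prod.snd) := by
  have : IsProbabilityMeasure (γ.map Prod.fst) := hγ.1.1 ▸ ‹_›
  have : IsProbabilityMeasure γ := Measure.isProbabilityMeasure_of_map Prod.fst
  have hΓ := hγ.isCyclicallyMonotone_support hc_cont hc_nonneg hγfin.ne
  exact ⟨⟨rfl, rfl⟩, fun π hπ => hΓ.transportCost_le hc_cont hc_nonneg
    (hac.ae_le Measure.support_mem_ae) hπ.1 hπ.2⟩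

/-- Corollary: optimality is inherited by absolutely continuous measures.
If `γ` is an optimal coupling with finite cost between probability measures `μ` and `ν`
on Polish spaces, `c` is a continuous non-negative cost, and `ω` is a probability measure
on `X × Y` with `ω ≪ γ` and finite cost, then `ω` is an optimal coupling between its
marginals. -/
theorem stmt0 {X Y : Type*}
    [MeasurableSpace X] [TopologicalSpace X] [PolishSpace X] [BorelSpace X]
    [MeasurableSpace Y] [TopologicalSpace Y] [PolishSpace Y] [BorelSpace Y]
    (c : X × Y → ℝ) (hc_cont : Continuous c) (hc_nonneg : ∀ p, 0 ≤ c p)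
    (μ : Measure X) (ν : Measure Y) [IsProbabilityMeasure μ] [IsProbabilityMeasure ν]
    (γ : Measure (X × Y)) (hγ : IsOptimalCoupling c γ μ ν)
    (hγfin : transportCost c γ < ⊤)
    (ω : Measure (X × Y)) [IsProbabilityMeasure ω]
    (hac : ω ≪ γ) (hωfin : transportCost c ω < ⊤) :
    IsOptimalCoupling c ω (ω.map Prod.fst) (ω.map Prod.snd) :=
  stmt0_general c hc_cont hc_nonneg μ ν γ hγ hγfin ω hac
end
end

section
/- Let X and Y be Polish spaces, c : X × Y → ℝ a continuous non-negative cost function with c(x,y) ≤ c_X(x) + c_Y(y) pointwise. Let μ ∈ P_c(X), ν ∈ P_c(Y), and let γ be an optimal coupling between μ and ν. Suppose η ∈ P_c(X) with η ≪ μ and the Radon–Nikodym derivative f(x) := (dη/dμ)(x) is bounded: f(x) < M for some M < ∞. Then ω := f(x)·γ is an optimal coupling between its marginals η and ζ := (proj_Y)_# ω. -/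
open MeasureTheory ProbabilityTheory Set
open scoped ENNReal

noncomputable section

lemma map_fst_withDensity {X Y : Type*} [MeasurableSpace X] [MeasurableSpace Y]
    (γ : Measure (X × Y)) (h : X → ℝ≥0∞) (hh : Measurable h) :
    (γ.withDensity (fun p => h p.1)).map Prod.fst = (γ.map Prod.fst).withDensity h := by
  ext s hs
  rw [Measure.map_apply measurable_fst hs,
    withDensity_apply _ (measurable_fst hs), withDensity_apply _ hs,
    setLIntegral_map hs hh measurable_fst]

/-- Corollary: sending a bounded Radon–Nikodym derivative through an
optimal coupling. If `γ` is an optimal coupling between `μ ∈ P_c(X)` and `ν ∈ P_c(Y)`,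
`η ∈ P_c(X)` is absolutely continuous with respect to `μ` with bounded Radon–Nikodym
derivative `f = dη/dμ`, then `ω := f(x)·γ` is an optimal coupling between its marginals
`η` and `ζ := (proj_Y)_# ω`. -/
theorem stmt1 {X Y : Type*}
    [MeasurableSpace X] [TopologicalSpace X] [PolishSpace X] [BorelSpace X]
    [MeasurableSpace Y] [TopologicalSpace Y] [PolishSpace Y] [BorelSpace Y]
    (c : X × Y → ℝ) (hc_cont : Continuous c) (hc_nonneg : ∀ p, 0 ≤ c p)
    (cX : X → ℝ) (cY : Y → ℝ) (hcX : Measurable cX) (hcY : Measurable cY)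
    (hc_bound : ∀ p : X × Y, c p ≤ cX p.1 + cY p.2)
    (μ : Measure X) (ν : Measure Y) [IsProbabilityMeasure μ] [IsProbabilityMeasure ν]
    (hμc : ∫⁻ x, ENNReal.ofReal (cX x) ∂μ < ⊤)
    (hνc : ∫⁻ y, ENNReal.ofReal (cY y) ∂ν < ⊤)
    (γ : Measure (X × Y)) (hγ : IsOptimalCoupling c γ μ ν)
    (η : Measure X) [IsProbabilityMeasure η]
    (hηc : ∫⁻ x, ENNReal.ofReal (cX x) ∂η < ⊤)
    (hac : η ≪ μ)
    (M : ℝ≥0∞) (hM : M < ⊤) (hf_bdd : ∀ᵐ x ∂μ, η.rnDeriv μ x < M)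
    (ω : Measure (X × Y)) (hω : ω = γ.withDensity (fun p => η.rnDeriv μ p.1)) :
    IsOptimalCoupling c ω η (ω.map Prod.snd) := by
  set f : X → ℝ≥0∞ := η.rnDeriv μ with hf
  have hfm : Measurable f := Measure.measurable_rnDeriv η μ
  have hγfst : γ.map Prod.fst = μ := hγ.1.1
  have hγsnd : γ.map Prod.snd = ν := hγ.1.2
  -- ω is a coupling of η and its snd marginal
  have hωfst : ω.map Prod.fst = η := by
    rw [hω, map_fst_withDensity γ f hfm, hγfst, Measure.withDensity_rnDeriv_eq η μ hac]
  have hωcoupling : IsCoupling ω η (ω.map Prod.snd) := ⟨hωfst, rfl⟩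
  -- M is positive
  have hM0 : M ≠ 0 := by
    rintro rfl
    haveI : (ae μ).NeBot := ae_neBot.2 (IsProbabilityMeasure.ne_zero μ)
    obtain ⟨x, hx⟩ := hf_bdd.exists
    exact absurd hx (by simp)
  have hMtop : M ≠ ⊤ := hM.ne
  -- the density g := M⁻¹ * f ∘ fst, a.e. ≤ 1 on γ
  set g : X × Y → ℝ≥0∞ := fun p => M⁻¹ * f p.1 with hg
  have hgm : Measurable g := (hfm.comp measurable_fst).const_mul _
  have hf_ae_γ : ∀ᵐ p ∂γ, f p.1 < M := by
    have hs : MeasurableSet {x | f x < M} := measurableSet_lt hfm measurable_const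
    have : ∀ᵐ x ∂(γ.map Prod.fst), f x < M := hγfst ▸ hf_bdd
    exact (ae_map_iff measurable_fst.aemeasurable hs).1 this
  have hg_le : ∀ᵐ p ∂γ, g p ≤ 1 := by
    filter_upwards [hf_ae_γ] with p hp
    calc M⁻¹ * f p.1 ≤ M⁻¹ * M := mul_le_mul_right hp.le _
    _ = 1 := ENNReal.inv_mul_cancel hM0 hMtop
  -- decomposition γ = γ.withDensity g + γ.withDensity (1 - g)
  have hdens_g : γ.withDensity g = M⁻¹ • ω := by
    have hm : Measurable fun p : X × Y => f p.1 := hfm.comp measurable_fst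
    rw [hω, ← withDensity_smul M⁻¹ hm]
    congr 1
  have hdecomp : γ.withDensity g + γ.withDensity (fun p => 1 - g p) = γ := by
    rw [← withDensity_add_left hgm]
    have : (fun p => g p + (1 - g p)) =ᵐ[γ] (fun _ => 1) := by
      filter_upwards [hg_le] with p hp
      exact add_tsub_cancel_of_le hp
    calc γ.withDensity (g + fun p => 1 - g p) = γ.withDensity (fun _ => 1) :=
          withDensity_congr_ae this
      _ = γ := by simp
  -- cost of γ is finite
  have cost_le : ∀ (θ : Measure (X × Y)) (a : Measure X) (b : Measure Y), IsCoupling θ a b →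
      transportCost c θ ≤ (∫⁻ x, ENNReal.ofReal (cX x) ∂a) + ∫⁻ y, ENNReal.ofReal (cY y) ∂b := by
    intro θ a b ⟨h1, h2⟩
    have : transportCost c θ ≤
        ∫⁻ p, ENNReal.ofReal (cX p.1) + ENNReal.ofReal (cY p.2) ∂θ := by
      refine lintegral_mono fun p => ?_
      calc ENNReal.ofReal (c p) ≤ ENNReal.ofReal (cX p.1 + cY p.2) :=
            ENNReal.ofReal_le_ofReal (hc_bound p)
        _ ≤ ENNReal.ofReal (cX p.1) + ENNReal.ofReal (cY p.2) := ENNReal.ofReal_add_le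
    refine this.trans_eq ?_
    have m1 : Measurable fun p : X × Y => ENNReal.ofReal (cX p.1) :=
      (hcX.comp measurable_fst).ennreal_ofReal
    have m2 : Measurable fun x : X => ENNReal.ofReal (cX x) := hcX.ennreal_ofReal
    have m3 : Measurable fun y : Y => ENNReal.ofReal (cY y) := hcY.ennreal_ofReal
    rw [lintegral_add_left m1, ← h1, ← h2,
      lintegral_map m2 measurable_fst, lintegral_map m3 measurable_snd]
  have hγcost : transportCost c γ < ⊤ :=
    lt_of_le_of_lt (cost_le γ μ ν hγ.1) (ENNReal.add_lt_top.2 ⟨hμc, hνc⟩)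
  -- cost of the remainder measure is finite
  set ρ : Measure (X × Y) := γ.withDensity (fun p => 1 - g p) with hρ
  have hρ_le : transportCost c ρ ≤ transportCost c γ := by
    have hle : ρ ≤ γ := by
      conv_rhs => rw [← hdecomp]
      exact Measure.le_add_left le_rfl
    exact lintegral_mono' hle le_rfl
  have hρ_fin : transportCost c ρ ≠ ⊤ := (hρ_le.trans_lt hγcost).ne
  -- additivity of cost
  have cost_add : ∀ (θ₁ θ₂ : Measure (X × Y)),
      transportCost c (θ₁ + θ₂) = transportCost c θ₁ + transportCost c θ₂ := by
    intro θ₁ θ₂; exact lintegral_add_measure _ θ₁ θ₂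
  have cost_smul : ∀ (r : ℝ≥0∞) (θ : Measure (X × Y)),
      transportCost c (r • θ) = r * transportCost c θ := by
    intro r θ; exact lintegral_smul_measure r _
  -- optimality
  refine ⟨hωcoupling, fun ω' hω' => ?_⟩
  -- build competitor for γ
  set γ' : Measure (X × Y) := ρ + M⁻¹ • ω' with hγ'
  have hγ'coupling : IsCoupling γ' μ ν := by
    constructor
    · rw [hγ', Measure.map_add _ _ measurable_fst, Measure.map_smul, hω'.1,
        hρ, map_fst_withDensity γ _ ((hfm.const_mul M⁻¹).const_sub 1), hγfst]
      have : μ.withDensity (fun x => M⁻¹ * f x) = M⁻¹ • η := by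
        rw [← Measure.withDensity_rnDeriv_eq η μ hac, ← withDensity_smul _ hfm]; rfl
      calc μ.withDensity (fun x => 1 - M⁻¹ * f x) + M⁻¹ • η
          = μ.withDensity (fun x => 1 - M⁻¹ * f x) + μ.withDensity (fun x => M⁻¹ * f x) := by
            rw [this]
        _ = μ.withDensity (fun x => (M⁻¹ * f x) + (1 - M⁻¹ * f x)) := by
            rw [add_comm, ← withDensity_add_left (hfm.const_mul M⁻¹)]; rfl
        _ = μ := by
            have heq : (fun x => (M⁻¹ * f x) + (1 - M⁻¹ * f x)) =ᵐ[μ] (fun _ => 1) := by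
              filter_upwards [hf_bdd] with x hx
              refine add_tsub_cancel_of_le ?_
              calc M⁻¹ * f x ≤ M⁻¹ * M := mul_le_mul_right hx.le _
                _ = 1 := ENNReal.inv_mul_cancel hM0 hMtop
            rw [withDensity_congr_ae heq]
            simp
    · rw [hγ', Measure.map_add _ _ measurable_snd, Measure.map_smul, hω'.2]
      have : M⁻¹ • (ω.map Prod.snd) = (γ.withDensity g).map Prod.snd := by
        rw [hdens_g, Measure.map_smul]
      rw [this, add_comm, ← Measure.map_add _ _ measurable_snd, hρ, hdecomp, hγsnd]
  -- compare costs
  have key := hγ.2 γ' hγ'coupling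
  have hγeq : transportCost c γ = transportCost c ρ + M⁻¹ * transportCost c ω := by
    conv_lhs => rw [← hdecomp]
    rw [cost_add, hdens_g, cost_smul, add_comm]
  have hγ'eq : transportCost c γ' = transportCost c ρ + M⁻¹ * transportCost c ω' := by
    rw [hγ', cost_add, cost_smul]
  rw [hγeq, hγ'eq] at key
  have key2 : M⁻¹ * transportCost c ω ≤ M⁻¹ * transportCost c ω' :=
    (ENNReal.add_le_add_iff_left hρ_fin).1 key
  exact (ENNReal.mul_le_mul_iff_right (by simp [hM0, hMtop]) (by simp [hM0, hMtop])).1 key2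
end
end

section
/- Let X and Y be Polish spaces, c : X × Y → ℝ a continuous non-negative cost function with c(x,y) ≤ c_X(x) + c_Y(y) pointwise. Let γ be an optimal coupling between μ ∈ P_c(X) and ν ∈ P_c(Y). Then for every η ∈ ACP^b_c(μ), the measure η ⊙ K^γ := (dη/dμ)(x)·γ is an optimal coupling between η and ηK^γ := (proj_Y)_#((dη/dμ)(x)·γ), and ηK^γ ∈ P_c(Y), i.e. ∫ c_Y d(ηK^γ) < ∞. -/
open MeasureTheory ProbabilityTheory Set
open scoped ENNReal

noncomputable section

/-- Membership in `ACP^b_c(μ)`: `η` is a probability measure with finite `c_X`-integral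
that is absolutely continuous with respect to `μ` with bounded Radon–Nikodym
derivative. -/
def MemACPbc {X : Type*} [MeasurableSpace X] (cX : X → ℝ) (μ η : Measure X) : Prop :=
  IsProbabilityMeasure η ∧ (∫⁻ x, ENNReal.ofReal (cX x) ∂η < ⊤) ∧ η ≪ μ ∧
    ∃ M : ℝ≥0∞, M < ⊤ ∧ ∀ᵐ x ∂μ, η.rnDeriv μ x < M

lemma map_fst_wd {X Y : Type*} [MeasurableSpace X] [MeasurableSpace Y]
    (γ : Measure (X × Y)) (g : X → ℝ≥0∞) (hg : Measurable g) :
    (γ.withDensity (fun p => g p.1)).map Prod.fst = (γ.map Prod.fst).withDensity g := by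
  ext s hs
  rw [Measure.map_apply measurable_fst hs, withDensity_apply _ (measurable_fst hs),
      withDensity_apply _ hs, setLIntegral_map hs hg measurable_fst]

/-- Let `γ` be an optimal coupling between `μ ∈ P_c(X)` and
`ν ∈ P_c(Y)`. Then for every `η ∈ ACP^b_c(μ)`, the measure
`η ⊙ K^γ := (dη/dμ)(x)·γ` is an optimal coupling between `η` and
`ηK^γ := (proj_Y)_# ((dη/dμ)(x)·γ)`, and `ηK^γ ∈ P_c(Y)`. -/
theorem stmt4 {X Y : Type*}
    [MeasurableSpace X] [TopologicalSpace X] [PolishSpace X] [BorelSpace X]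
    [MeasurableSpace Y] [TopologicalSpace Y] [PolishSpace Y] [BorelSpace Y]
    (c : X × Y → ℝ) (hc_cont : Continuous c) (hc_nonneg : ∀ p, 0 ≤ c p)
    (cX : X → ℝ) (cY : Y → ℝ) (hcX : Measurable cX) (hcY : Measurable cY)
    (hc_bound : ∀ p : X × Y, c p ≤ cX p.1 + cY p.2)
    (μ : Measure X) (ν : Measure Y) [IsProbabilityMeasure μ] [IsProbabilityMeasure ν]
    (hμc : ∫⁻ x, ENNReal.ofReal (cX x) ∂μ < ⊤)
    (hνc : ∫⁻ y, ENNReal.ofReal (cY y) ∂ν < ⊤)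
    (γ : Measure (X × Y)) (hγ : IsOptimalCoupling c γ μ ν) :
    ∀ η : Measure X, MemACPbc cX μ η →
      IsOptimalCoupling c (γ.withDensity (fun p => η.rnDeriv μ p.1)) η
        ((γ.withDensity (fun p => η.rnDeriv μ p.1)).map Prod.snd) ∧
      ∫⁻ y, ENNReal.ofReal (cY y)
          ∂((γ.withDensity (fun p => η.rnDeriv μ p.1)).map Prod.snd) < ⊤ := by

  obtain ⟨⟨hγfst, hγsnd⟩, hγopt⟩ := hγ
  -- measurability facts
  have hcmeas : Measurable fun p : X × Y => ENNReal.ofReal (c p) :=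
    ENNReal.measurable_ofReal.comp hc_cont.measurable
  have hcYmeas : Measurable fun y : Y => ENNReal.ofReal (cY y) :=
    ENNReal.measurable_ofReal.comp hcY
  have hcXmeas : Measurable fun x : X => ENNReal.ofReal (cX x) :=
    ENNReal.measurable_ofReal.comp hcX
  -- finiteness of the cost of γ
  have hcostγ : transportCost c γ < ⊤ := by
    have h1 : transportCost c γ
        ≤ ∫⁻ p, (ENNReal.ofReal (cX p.1) + ENNReal.ofReal (cY p.2)) ∂γ := by
      refine lintegral_mono fun p => ?_
      exact le_trans (ENNReal.ofReal_le_ofReal (hc_bound p)) ENNReal.ofReal_add_le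
    have h2 : ∫⁻ p, (ENNReal.ofReal (cX p.1) + ENNReal.ofReal (cY p.2)) ∂γ
        = ∫⁻ p : X × Y, ENNReal.ofReal (cX p.1) ∂γ
          + ∫⁻ p : X × Y, ENNReal.ofReal (cY p.2) ∂γ :=
      lintegral_add_left (hcXmeas.comp measurable_fst) _
    have h3 : ∫⁻ p : X × Y, ENNReal.ofReal (cX p.1) ∂γ
        = ∫⁻ x, ENNReal.ofReal (cX x) ∂μ := by
      rw [← hγfst, lintegral_map hcXmeas measurable_fst]
    have h4 : ∫⁻ p : X × Y, ENNReal.ofReal (cY p.2) ∂γ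
        = ∫⁻ y, ENNReal.ofReal (cY y) ∂ν := by
      rw [← hγsnd, lintegral_map hcYmeas measurable_snd]
    refine lt_of_le_of_lt h1 ?_
    rw [h2, h3, h4]
    exact ENNReal.add_lt_top.mpr ⟨hμc, hνc⟩
  intro η hη
  obtain ⟨hηprob, hηc, hac, M0, hM0top, hM0⟩ := hη
  haveI := hηprob
  set f := η.rnDeriv μ with hf_def
  have hf : Measurable f := Measure.measurable_rnDeriv η μ
  set M := M0 + 1 with hM_def
  have hMtop : M ≠ ⊤ := by simp [hM_def, hM0top.ne]
  have hMne : M ≠ 0 := by simp [hM_def]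
  have hfM : ∀ᵐ x ∂μ, f x ≤ M :=
    hM0.mono fun x hx => le_trans hx.le (le_add_right le_rfl)
  have hfMγ : ∀ᵐ p ∂γ, f p.1 ≤ M := by
    have : ∀ᵐ x ∂(γ.map Prod.fst), f x ≤ M := hγfst ▸ hfM
    exact (ae_map_iff measurable_fst.aemeasurable
      (measurableSet_le hf measurable_const)).mp this
  have hημ : μ.withDensity f = η := Measure.withDensity_rnDeriv_eq η μ hac
  have hfst : Measurable fun p : X × Y => f p.1 := hf.comp measurable_fst
  have hcY2 : Measurable fun p : X × Y => ENNReal.ofReal (cY p.2) :=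
    hcYmeas.comp measurable_snd
  set γη := γ.withDensity (fun p => f p.1) with hγη_def
  -- first marginal of γη is η
  have hc1 : γη.map Prod.fst = η := by
    rw [hγη_def, map_fst_wd γ f hf, hγfst, hημ]
  set νη := γη.map Prod.snd with hνη_def
  -- cost of γη is finite
  have hcostγη : transportCost c γη < ⊤ := by
    have : transportCost c γη = ∫⁻ p, f p.1 * ENNReal.ofReal (c p) ∂γ := by
      rw [hγη_def, transportCost,
        lintegral_withDensity_eq_lintegral_mul γ hfst hcmeas]
      rfl
    rw [this]
    have hle : ∫⁻ p, f p.1 * ENNReal.ofReal (c p) ∂γ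
        ≤ ∫⁻ p, M * ENNReal.ofReal (c p) ∂γ :=
      lintegral_mono_ae (hfMγ.mono fun p hp => mul_le_mul_left hp _)
    refine lt_of_le_of_lt hle ?_
    rw [lintegral_const_mul' M _ hMtop]
    exact ENNReal.mul_lt_top hMtop.lt_top hcostγ
  -- finiteness of ∫ cY dνη
  have hνηc : ∫⁻ y, ENNReal.ofReal (cY y) ∂νη < ⊤ := by
    have h1 : ∫⁻ y, ENNReal.ofReal (cY y) ∂νη
        = ∫⁻ p, f p.1 * ENNReal.ofReal (cY p.2) ∂γ := by
      rw [hνη_def, lintegral_map hcYmeas measurable_snd, hγη_def,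
        lintegral_withDensity_eq_lintegral_mul γ hfst hcY2]
      rfl
    rw [h1]
    have hle : ∫⁻ p, f p.1 * ENNReal.ofReal (cY p.2) ∂γ
        ≤ ∫⁻ p, M * ENNReal.ofReal (cY p.2) ∂γ :=
      lintegral_mono_ae (hfMγ.mono fun p hp => mul_le_mul_left hp _)
    refine lt_of_le_of_lt hle ?_
    rw [lintegral_const_mul' M _ hMtop]
    refine ENNReal.mul_lt_top hMtop.lt_top ?_
    rw [← hγsnd, lintegral_map hcYmeas measurable_snd] at hνc
    exact hνc
  -- set up for optimality
  set d : X → ℝ≥0∞ := fun x => 1 - M⁻¹ * f x with hd_def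
  have hd : Measurable d := measurable_const.sub (hf.const_mul _)
  have hinvM : M⁻¹ * M = 1 := ENNReal.inv_mul_cancel hMne hMtop
  have hkey : ∀ x, f x ≤ M → d x + M⁻¹ * f x = 1 := by
    intro x hx
    have h1 : M⁻¹ * f x ≤ 1 := by
      calc M⁻¹ * f x ≤ M⁻¹ * M := mul_le_mul_right hx _
        _ = 1 := hinvM
    exact tsub_add_cancel_of_le h1
  -- the identity M⁻¹ • η = μ.withDensity (M⁻¹ * f), etc.
  have hsmulη : μ.withDensity (fun x => M⁻¹ * f x) = M⁻¹ • η := by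
    rw [← hημ, ← withDensity_smul _ hf]; rfl
  have hsmulγη : γ.withDensity (fun p => M⁻¹ * f p.1) = M⁻¹ • γη := by
    rw [hγη_def, ← withDensity_smul _ hfst]; rfl
  -- splitting of μ
  have hsplitμ : μ.withDensity d + M⁻¹ • η = μ := by
    rw [← hsmulη, ← withDensity_add_left hd]
    have : (d + fun x => M⁻¹ * f x) =ᶠ[ae μ] (1 : X → ℝ≥0∞) :=
      hfM.mono fun x hx => by simpa using hkey x hx
    rw [withDensity_congr_ae this, withDensity_one]
  -- splitting of γ
  have hsplitγ : γ.withDensity (fun p => d p.1) + M⁻¹ • γη = γ := by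
    rw [← hsmulγη, ← withDensity_add_left (show Measurable fun p : X × Y => d p.1 from hd.comp measurable_fst)]
    have : ((fun p : X × Y => d p.1) + fun p : X × Y => M⁻¹ * f p.1)
        =ᶠ[ae γ] (1 : X × Y → ℝ≥0∞) :=
      hfMγ.mono fun p hp => by simpa using hkey p.1 hp
    rw [withDensity_congr_ae this, withDensity_one]
  -- cost of the d-part is finite
  set A := transportCost c (γ.withDensity (fun p => d p.1)) with hA_def
  have hAle : A ≤ transportCost c γ := by
    refine lintegral_mono' ?_ le_rfl
    conv_rhs => rw [← hsplitγ]
    exact Measure.le_add_right le_rfl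
  have hAtop : A ≠ ⊤ := (lt_of_le_of_lt hAle hcostγ).ne
  have hcostsplit : transportCost c γ = A + M⁻¹ * transportCost c γη := by
    conv_lhs => rw [← hsplitγ]
    rw [transportCost, lintegral_add_measure, lintegral_smul_measure]
    rfl
  refine ⟨⟨⟨hc1, rfl⟩, ?_⟩, hνηc⟩
  intro γ' hγ'
  -- the competitor coupling of μ and ν
  set γt := γ.withDensity (fun p => d p.1) + M⁻¹ • γ' with hγt_def
  have hγtcoupling : IsCoupling γt μ ν := by
    constructor
    · rw [hγt_def, Measure.map_add _ _ measurable_fst, Measure.map_smul,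
        map_fst_wd γ d hd, hγfst, hγ'.1]
      exact hsplitμ
    · have hν : (γ.withDensity (fun p => d p.1)).map Prod.snd + M⁻¹ • νη = ν := by
        have := congrArg (Measure.map Prod.snd) hsplitγ
        rwa [Measure.map_add _ _ measurable_snd, Measure.map_smul, hγsnd, ← hνη_def]
          at this
      rw [hγt_def, Measure.map_add _ _ measurable_snd, Measure.map_smul, hγ'.2]
      exact hν
  have hcostγt : transportCost c γt
      = A + M⁻¹ * transportCost c γ' := by
    rw [hγt_def, transportCost, lintegral_add_measure, lintegral_smul_measure]
    rfl
  have h := hγopt γt hγtcoupling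
  rw [hcostγt, hcostsplit] at h
  have h2 : M⁻¹ * transportCost c γη ≤ M⁻¹ * transportCost c γ' :=
    (ENNReal.add_le_add_iff_left hAtop).mp h
  exact (ENNReal.mul_le_mul_iff_right (ENNReal.inv_ne_zero.mpr hMtop)
    (ENNReal.inv_ne_top.mpr hMne)).mp h2
end
end

section
/- Let K be a Markov kernel from a Polish space X to a Polish space Y, and let a and b be finite signed measures on X and Y respectively with equal total mass ‖a‖(X) = ‖b‖(Y) and equal integral a(X) = b(Y). If aK = b, then the Jordan parts correspond exactly: a⁺K = b⁺ and a⁻K = b⁻. (Without the equal-mass assumption, one still has b⁺ ≤ a⁺K and b⁻ ≤ a⁻K whenever aK = b.) -/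
/-!
Write `p = a⁺K` and `n = a⁻K`, so that `b = aK = p − n`. The Jordan decomposition is the
minimal splitting of a signed measure into a difference of measures: on the positive Hahn set
`P` of `b`, `b⁺(s) = p(P ∩ s) − n(P ∩ s) ≤ p(s)`, hence `b⁺ ≤ p` and likewise `b⁻ ≤ n`.
A Markov kernel preserves mass, so `p(Y) + n(Y) = ‖a‖(X) = ‖b‖(Y) = b⁺(Y) + b⁻(Y)`, and two
inequalities between finite measures whose total masses add up to the same number are both
equalities.
-/

open MeasureTheory ProbabilityTheory Set
open scoped ENNReal

noncomputable section

/-- The image of a finite measure under a Markov kernel is finite. -/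
instance bindIsFiniteMeasure {X Y : Type*} [MeasurableSpace X] [MeasurableSpace Y]
    (μ : Measure X) [IsFiniteMeasure μ] (K : Kernel X Y) [IsMarkovKernel K] :
    IsFiniteMeasure (μ.bind K) := by
  constructor
  rw [Measure.bind_apply MeasurableSet.univ (Kernel.measurable K).aemeasurable]
  calc ∫⁻ x, (K x) Set.univ ∂μ = ∫⁻ _, 1 ∂μ := by simp
    _ = μ Set.univ := by simp
    _ < ⊤ := measure_lt_top μ _

/-- The image `aK := a⁺K − a⁻K` of a finite signed measure `a = a⁺ − a⁻` (Jordan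
decomposition) under a Markov kernel `K`. -/
def signedKernelImage {X Y : Type*} [MeasurableSpace X] [MeasurableSpace Y]
    (a : SignedMeasure X) (K : Kernel X Y) [IsMarkovKernel K] : SignedMeasure Y :=
  (a.toJordanDecomposition.posPart.bind K).toSignedMeasure
    - (a.toJordanDecomposition.negPart.bind K).toSignedMeasure

namespace MeasureTheory

variable {α : Type*} [MeasurableSpace α]

theorem Measure.toSignedMeasure_sub_posPart_le (μ ν : Measure α)
    [IsFiniteMeasure μ] [IsFiniteMeasure ν] :
    (μ.toSignedMeasure - ν.toSignedMeasure).toJordanDecomposition.posPart ≤ μ := by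
  set s := μ.toSignedMeasure - ν.toSignedMeasure
  obtain ⟨i, hi, hpos, -, hposPart, -⟩ := s.toJordanDecomposition_spec
  refine Measure.le_intro fun t ht _ ↦ ?_
  rw [← ENNReal.toReal_le_toReal (measure_ne_top _ _) (measure_ne_top _ _), ← measureReal_def,
    ← measureReal_def, hposPart, SignedMeasure.toMeasureOfZeroLE_real_apply _ hpos hi ht,
    Measure.toSignedMeasure_sub_apply (hi.inter ht)]
  have hμ : μ.real (i ∩ t) ≤ μ.real t := measureReal_mono inter_subset_right
  linarith [measureReal_nonneg (μ := ν) (s := i ∩ t)]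

theorem Measure.toSignedMeasure_sub_negPart_le (μ ν : Measure α)
    [IsFiniteMeasure μ] [IsFiniteMeasure ν] :
    (μ.toSignedMeasure - ν.toSignedMeasure).toJordanDecomposition.negPart ≤ ν := by
  rw [← JordanDecomposition.neg_posPart, ← SignedMeasure.toJordanDecomposition_neg, neg_sub]
  exact ν.toSignedMeasure_sub_posPart_le μ

theorem Measure.eq_and_eq_of_le_of_measure_univ_add_le {μ₁ μ₂ ν₁ ν₂ : Measure α}
    [IsFiniteMeasure ν₁] [IsFiniteMeasure ν₂] (h₁ : μ₁ ≤ ν₁) (h₂ : μ₂ ≤ ν₂)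
    (h_univ : ν₁ univ + ν₂ univ ≤ μ₁ univ + μ₂ univ) : μ₁ = ν₁ ∧ μ₂ = ν₂ := by
  have : IsFiniteMeasure (μ₁ + μ₂) := isFiniteMeasure_of_le (ν₁ + ν₂) (add_le_add h₁ h₂)
  have hsum : μ₁ + μ₂ = ν₁ + ν₂ := by
    refine Measure.eq_of_le_of_measure_univ_eq (add_le_add h₁ h₂) ?_
    simpa only [Measure.add_apply] using le_antisymm (add_le_add (h₁ univ) (h₂ univ)) h_univ
  refine ⟨le_antisymm h₁ ?_, le_antisymm h₂ ?_⟩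
  · refine Measure.le_of_add_le_add_left (μ := ν₂) ?_
    rw [add_comm, ← hsum, add_comm]
    exact add_le_add h₂ le_rfl
  · refine Measure.le_of_add_le_add_left (μ := ν₁) ?_
    rw [← hsum]
    exact add_le_add h₁ le_rfl

end MeasureTheory

theorem stmt9_general {X Y : Type*}
    [MeasurableSpace X]
    [MeasurableSpace Y]
    (K : Kernel X Y) [IsMarkovKernel K] :
    (∀ (a : SignedMeasure X) (b : SignedMeasure Y),
      a.totalVariation Set.univ = b.totalVariation Set.univ →
      a Set.univ = b Set.univ →
      signedKernelImage a K = b →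
      a.toJordanDecomposition.posPart.bind K = b.toJordanDecomposition.posPart ∧
        a.toJordanDecomposition.negPart.bind K = b.toJordanDecomposition.negPart) ∧
    (∀ (a : SignedMeasure X) (b : SignedMeasure Y),
      signedKernelImage a K = b →
      b.toJordanDecomposition.posPart ≤ a.toJordanDecomposition.posPart.bind K ∧
        b.toJordanDecomposition.negPart ≤ a.toJordanDecomposition.negPart.bind K) := by
  have jordan_le : ∀ (a : SignedMeasure X) (b : SignedMeasure Y), signedKernelImage a K = b →
      b.toJordanDecomposition.posPart ≤ a.toJordanDecomposition.posPart.bind K ∧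
        b.toJordanDecomposition.negPart ≤ a.toJordanDecomposition.negPart.bind K := by
    rintro a b rfl
    exact ⟨Measure.toSignedMeasure_sub_posPart_le _ _, Measure.toSignedMeasure_sub_negPart_le _ _⟩
  refine ⟨fun a b h_mass _ hab ↦ ?_, jordan_le⟩
  obtain ⟨hpos, hneg⟩ := jordan_le a b hab
  have h_univ : (a.toJordanDecomposition.posPart.bind K) univ
      + (a.toJordanDecomposition.negPart.bind K) univ
      = b.toJordanDecomposition.posPart univ + b.toJordanDecomposition.negPart univ := by
    simpa only [Measure.comp_apply_univ, SignedMeasure.totalVariation, Measure.add_apply]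
      using h_mass
  obtain ⟨hpos_eq, hneg_eq⟩ := Measure.eq_and_eq_of_le_of_measure_univ_add_le hpos hneg h_univ.le
  exact ⟨hpos_eq.symm, hneg_eq.symm⟩

/-- If `K` is a Markov kernel and `a`, `b` are finite signed measures
with equal total mass and equal integral such that `aK = b`, then the Jordan parts
correspond exactly: `a⁺K = b⁺` and `a⁻K = b⁻`.  Without the equal-mass assumption one
still has `b⁺ ≤ a⁺K` and `b⁻ ≤ a⁻K` whenever `aK = b`. -/
theorem stmt9 {X Y : Type*}
    [MeasurableSpace X] [TopologicalSpace X] [PolishSpace X] [BorelSpace X]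
    [MeasurableSpace Y] [TopologicalSpace Y] [PolishSpace Y] [BorelSpace Y]
    (K : Kernel X Y) [IsMarkovKernel K] :
    (∀ (a : SignedMeasure X) (b : SignedMeasure Y),
      a.totalVariation Set.univ = b.totalVariation Set.univ →
      a Set.univ = b Set.univ →
      signedKernelImage a K = b →
      a.toJordanDecomposition.posPart.bind K = b.toJordanDecomposition.posPart ∧
        a.toJordanDecomposition.negPart.bind K = b.toJordanDecomposition.negPart) ∧
    (∀ (a : SignedMeasure X) (b : SignedMeasure Y),
      signedKernelImage a K = b →
      b.toJordanDecomposition.posPart ≤ a.toJordanDecomposition.posPart.bind K ∧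
        b.toJordanDecomposition.negPart ≤ a.toJordanDecomposition.negPart.bind K) :=
  stmt9_general K
end
end

section
/- Let μ and ν be probability measures on ℝ with cumulative distribution functions F_μ and F_ν, and let γ_mon be the monotone coupling between μ and ν. Suppose there are points c₁ < … < c_{N−1} and d₁ < … < d_{N−1} in ℝ with F_μ(cᵢ) = F_ν(dᵢ) ≠ 0 for i = 1,…,N−1, and set c₀ = d₀ = −∞ and c_N = d_N = +∞. Then γ_mon is concentrated on ⋃_{i=1}^{N} (c_{i−1}, cᵢ] × (d_{i−1}, dᵢ]; equivalently, γ_mon((cᵢ, ∞) × (−∞, dᵢ]) = 0 and γ_mon((−∞, cᵢ] × (dᵢ, ∞)) = 0 for each i. -/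
open MeasureTheory Set
open scoped ENNReal

noncomputable section

/-- `γ` is the monotone coupling of `μ` and `ν` on `ℝ`:
`γ((−∞,c] × (−∞,d]) = min(F_μ(c), F_ν(d))` for all `c, d`. -/
def IsMonotoneCoupling (γ : Measure (ℝ × ℝ)) (μ ν : Measure ℝ) : Prop :=
  IsCoupling γ μ ν ∧ ∀ c d : ℝ, γ (Iic c ×ˢ Iic d) = min (μ (Iic c)) (ν (Iic d))

/-- For points `p 1 < … < p (n-1)` (with the conventions `p₀ = −∞`, `p_n = +∞`),
`sigInterval n p i` is the interval `(p_{i-1}, p_i]`, for `1 ≤ i ≤ n`. -/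
def sigInterval (n : ℕ) (p : ℕ → ℝ) (i : ℕ) : Set ℝ :=
  (if i = 1 then Set.univ else Set.Ioi (p (i - 1))) ∩
    (if i = n then Set.univ else Set.Iic (p i))


lemma sig_left {N : ℕ} {p : ℕ → ℝ} {i : ℕ} {x : ℝ} (h : x ∈ sigInterval N p i)
    (hi : i ≠ 1) : p (i - 1) < x := by
  simp only [sigInterval, hi, if_neg, mem_inter_iff] at h
  simpa using h.1

lemma sig_right {N : ℕ} {p : ℕ → ℝ} {i : ℕ} {x : ℝ} (h : x ∈ sigInterval N p i)
    (hi : i ≠ N) : x ≤ p i := by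
  simp only [sigInterval, hi, if_neg, mem_inter_iff] at h
  simpa using h.2

lemma mono_aux (N : ℕ) (p : ℕ → ℝ)
    (hp : ∀ i, 1 ≤ i → i + 1 ≤ N - 1 → p i < p (i + 1)) :
    ∀ a b, 1 ≤ a → a ≤ b → b ≤ N - 1 → p a ≤ p b := by
  intro a b ha hab hb
  induction b with
  | zero => omega
  | succ b ih =>
    rcases Nat.lt_or_ge a (b + 1) with h | h
    · have h1 : a ≤ b := by omega
      have h2 : 1 ≤ b := by omega
      exact le_trans (ih h1 (by omega)) (le_of_lt (hp b h2 (by omega)))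
    · have : a = b + 1 := by omega
      rw [this]

lemma cover (N : ℕ) (hN : 1 ≤ N) (p : ℕ → ℝ) (x : ℝ) :
    ∃ i, 1 ≤ i ∧ i ≤ N ∧ x ∈ sigInterval N p i := by
  classical
  by_cases h : ∃ i, 1 ≤ i ∧ i ≤ N - 1 ∧ x ≤ p i
  · set i := Nat.find h with hi
    obtain ⟨h1, h2, h3⟩ := Nat.find_spec h
    refine ⟨i, h1, by omega, ?_⟩
    constructor
    · by_cases hone : i = 1
      · simp [hone]
      · simp only [if_neg hone, mem_Ioi]
        by_contra hx
        push_neg at hx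
        exact Nat.find_min h (m := i - 1) (by omega) ⟨by omega, by omega, hx⟩
    · have : i ≠ N := by omega
      simp only [if_neg this, mem_Iic]
      exact h3
  · refine ⟨N, hN, le_rfl, ?_⟩
    constructor
    · by_cases hone : N = 1
      · simp [hone]
      · simp only [if_neg hone, mem_Ioi]
        push_neg at h
        exact h (N - 1) (by omega) le_rfl
    · simp

lemma key (μ ν : Measure ℝ) [IsProbabilityMeasure μ] [IsProbabilityMeasure ν]
    (γ : Measure (ℝ × ℝ))
    (hγ : (γ.map Prod.fst = μ ∧ γ.map Prod.snd = ν) ∧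
      ∀ c d : ℝ, γ (Iic c ×ˢ Iic d) = min (μ (Iic c)) (ν (Iic d)))
    {c d : ℝ} (h : μ (Iic c) = ν (Iic d)) :
    γ (Ioi c ×ˢ Iic d) = 0 ∧ γ (Iic c ×ˢ Ioi d) = 0 := by
  have hminν : γ (Iic c ×ˢ Iic d) = ν (Iic d) := by rw [hγ.2 c d, h, min_self]
  have hminμ : γ (Iic c ×ˢ Iic d) = μ (Iic c) := by rw [hγ.2 c d, ← h, min_self]
  constructor
  · have h1 : ν (Iic d) = γ (Iic c ×ˢ Iic d) + γ (Ioi c ×ˢ Iic d) := by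
      rw [← hγ.1.2, Measure.map_apply measurable_snd measurableSet_Iic,
        ← measure_union ?_ (measurableSet_Ioi.prod measurableSet_Iic)]
      · congr 1
        rw [← Set.union_prod, Iic_union_Ioi]
        ext ⟨a, b⟩; simp
      · rw [Set.disjoint_left]
        rintro ⟨a, b⟩ ⟨ha, -⟩ ⟨ha', -⟩
        exact absurd ha (by simpa using ha')
    rw [hminν] at h1
    exact ((ENNReal.add_right_inj (measure_ne_top ν _)).mp
      (by rw [add_zero]; exact h1)).symm
  · have h1 : μ (Iic c) = γ (Iic c ×ˢ Iic d) + γ (Iic c ×ˢ Ioi d) := by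
      rw [← hγ.1.1, Measure.map_apply measurable_fst measurableSet_Iic,
        ← measure_union ?_ (measurableSet_Iic.prod measurableSet_Ioi)]
      · congr 1
        rw [← Set.prod_union, Iic_union_Ioi]
        ext ⟨a, b⟩; simp
      · rw [Set.disjoint_left]
        rintro ⟨a, b⟩ ⟨-, hb⟩ ⟨-, hb'⟩
        exact absurd hb (by simpa using hb')
    rw [hminμ] at h1
    exact ((ENNReal.add_right_inj (measure_ne_top μ _)).mp
      (by rw [add_zero]; exact h1)).symm

/-- structure of the monotone coupling.  Suppose `μ, ν` are
probability measures on `ℝ`, `γ` is the monotone coupling between them, and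
`c₁ < … < c_{N-1}`, `d₁ < … < d_{N-1}` satisfy `F_μ(cᵢ) = F_ν(dᵢ) ≠ 0`.  Then `γ` is
concentrated on `⋃_{i=1}^N (c_{i-1}, cᵢ] × (d_{i-1}, dᵢ]` (with `c₀ = d₀ = −∞`,
`c_N = d_N = +∞`); equivalently `γ((cᵢ,∞) × (−∞,dᵢ]) = 0` and
`γ((−∞,cᵢ] × (dᵢ,∞)) = 0` for each `i`. -/
theorem stmt10 (μ ν : Measure ℝ) [IsProbabilityMeasure μ] [IsProbabilityMeasure ν]
    (γ : Measure (ℝ × ℝ)) (hγ : IsMonotoneCoupling γ μ ν)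
    (N : ℕ) (hN : 1 ≤ N) (cs ds : ℕ → ℝ)
    (hcs_mono : ∀ i, 1 ≤ i → i + 1 ≤ N - 1 → cs i < cs (i + 1))
    (hds_mono : ∀ i, 1 ≤ i → i + 1 ≤ N - 1 → ds i < ds (i + 1))
    (hF : ∀ i, 1 ≤ i → i ≤ N - 1 →
      μ (Iic (cs i)) = ν (Iic (ds i)) ∧ μ (Iic (cs i)) ≠ 0) :
    γ ((⋃ i ∈ Finset.Icc 1 N, sigInterval N cs i ×ˢ sigInterval N ds i)ᶜ) = 0 ∧
      ∀ i, 1 ≤ i → i ≤ N - 1 →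
        γ (Ioi (cs i) ×ˢ Iic (ds i)) = 0 ∧ γ (Iic (cs i) ×ˢ Ioi (ds i)) = 0 := by
  obtain ⟨⟨hfst, hsnd⟩, hmin⟩ := hγ
  have hkey : ∀ i, 1 ≤ i → i ≤ N - 1 →
      γ (Ioi (cs i) ×ˢ Iic (ds i)) = 0 ∧ γ (Iic (cs i) ×ˢ Ioi (ds i)) = 0 :=
    fun i hi1 hi2 => key μ ν γ ⟨⟨hfst, hsnd⟩, hmin⟩ (hF i hi1 hi2).1
  refine ⟨?_, hkey⟩
  have hnull : γ (⋃ i ∈ Finset.Icc 1 (N - 1),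
      (Ioi (cs i) ×ˢ Iic (ds i) ∪ Iic (cs i) ×ˢ Ioi (ds i))) = 0 := by
    refine (measure_biUnion_null_iff (Finset.Icc 1 (N - 1)).countable_toSet).mpr ?_
    intro i hi
    rw [Finset.mem_coe, Finset.mem_Icc] at hi
    exact measure_union_null (hkey i hi.1 hi.2).1 (hkey i hi.1 hi.2).2
  refine measure_mono_null ?_ hnull
  rintro ⟨x, y⟩ hxy
  rw [mem_compl_iff] at hxy
  simp only [mem_iUnion, not_exists] at hxy
  obtain ⟨i, hi1, hiN, hx⟩ := cover N hN cs x
  obtain ⟨j, hj1, hjN, hy⟩ := cover N hN ds y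
  have hij : i ≠ j := by
    rintro rfl
    exact hxy i (Finset.mem_Icc.mpr ⟨hi1, hiN⟩) (Set.mk_mem_prod hx hy)
  simp only [mem_iUnion]
  rcases Nat.lt_or_ge i j with hlt | hge
  · refine ⟨i, Finset.mem_Icc.mpr ⟨hi1, by omega⟩, Or.inr (Set.mk_mem_prod ?_ ?_)⟩
    · exact sig_right hx (by omega)
    · exact lt_of_le_of_lt
        (mono_aux N ds hds_mono i (j - 1) hi1 (by omega) (by omega))
        (sig_left hy (by omega))
  · have hlt : j < i := by omega
    refine ⟨j, Finset.mem_Icc.mpr ⟨hj1, by omega⟩, Or.inl (Set.mk_mem_prod ?_ ?_)⟩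
    · exact lt_of_le_of_lt
        (mono_aux N cs hcs_mono j (i - 1) hj1 (by omega) (by omega))
        (sig_left hx (by omega))
    · exact sig_right hy (by omega)
end
end

section
/- Let a and b be finite signed measures on ℝ that both have the same finite-length signature (z₁,…,z_n), with signature intervals (p_{i−1}, pᵢ] for a and (q_{i−1}, qᵢ] for b, and let α := ‖a‖ and β := ‖b‖ be the total variation measures (which have equal mass). Then the monotone coupling γ between α and β is concentrated on ⋃_{i=1}^{n} (p_{i−1}, pᵢ] × (q_{i−1}, qᵢ]. -/
/-! On the `i`-th signature interval the total variation of `a` is `|zᵢ|`, so the distribution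
functions of `α` and `β` agree at the signature points: `F_α(pᵢ) = |z₁| + ⋯ + |zᵢ| = F_β(qᵢ)`.
Whenever `F_α(c) = F_β(d)`, the monotone coupling gives the corner `(−∞, c] × (−∞, d]` the full
mass of both strips `(−∞, c] × ℝ` and `ℝ × (−∞, d]`, hence no mass to `(−∞, c] × (d, ∞)` or to
`(c, ∞) × (−∞, d]`. A point outside every block `(p_{i−1}, pᵢ] × (q_{i−1}, qᵢ]` lies in one of
these two sets for some `(c, d) = (pᵢ, qᵢ)`. -/

open MeasureTheory Set
open scoped ENNReal

noncomputable section

/-- The finite signed measure `a` has finite-length signature `(z 1, …, z n)` with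
signature points `p 1 < … < p (n-1)` (conventions `p₀ = −∞`, `p_n = +∞`, so the
signature intervals are `(p_{i-1}, p_i]`): on each signature interval `a` restricts to
either `a⁺` or `−a⁻` (i.e. the other Jordan part vanishes there), consecutive
restrictions have opposite (nonzero) signs, and `z i = a((p_{i-1}, p_i])`. -/
def HasSignature (a : SignedMeasure ℝ) (n : ℕ) (p : ℕ → ℝ) (z : ℕ → ℝ) : Prop :=
  1 ≤ n ∧
  (∀ i, 1 ≤ i → i + 1 ≤ n - 1 → p i < p (i + 1)) ∧
  (∀ i, 1 ≤ i → i ≤ n → z i = a (sigInterval n p i)) ∧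
  (∀ i, 1 ≤ i → i ≤ n → z i ≠ 0) ∧
  (∃ s : ℕ → Bool,
    (∀ i, 1 ≤ i → i + 1 ≤ n → s (i + 1) = !(s i)) ∧
    (∀ i, 1 ≤ i → i ≤ n →
      if s i then a.toJordanDecomposition.negPart (sigInterval n p i) = 0
      else a.toJordanDecomposition.posPart (sigInterval n p i) = 0))

namespace IsCoupling

variable {X Y : Type*} [MeasurableSpace X] [MeasurableSpace Y]
  {γ : Measure (X × Y)} {μ : Measure X} {ν : Measure Y} {s : Set X} {t : Set Y}

lemma measure_prod_univ (h : IsCoupling γ μ ν) (hs : MeasurableSet s) :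
    γ (s ×ˢ univ) = μ s := by
  rw [← h.1, Measure.map_apply measurable_fst hs, prod_univ]

lemma measure_univ_prod (h : IsCoupling γ μ ν) (ht : MeasurableSet t) :
    γ (univ ×ˢ t) = ν t := by
  rw [← h.2, Measure.map_apply measurable_snd ht, univ_prod]

lemma measure_prod_compl_eq_zero (h : IsCoupling γ μ ν) (hs : MeasurableSet s)
    (ht : MeasurableSet t) (hst : γ (s ×ˢ t) = μ s) (hfin : μ s ≠ ∞) :
    γ (s ×ˢ tᶜ) = 0 := by
  have hdiff : s ×ˢ tᶜ = s ×ˢ univ \ s ×ˢ t := by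
    rw [prod_sdiff_prod, sdiff_self, empty_prod, union_empty, compl_eq_univ_sdiff]
  rw [hdiff, measure_sdiff (prod_mono subset_rfl (subset_univ t)) (hs.prod ht).nullMeasurableSet
    (hst ▸ hfin), h.measure_prod_univ hs, hst, tsub_self]

lemma measure_compl_prod_eq_zero (h : IsCoupling γ μ ν) (hs : MeasurableSet s)
    (ht : MeasurableSet t) (hst : γ (s ×ˢ t) = ν t) (hfin : ν t ≠ ∞) :
    γ (sᶜ ×ˢ t) = 0 := by
  have hdiff : sᶜ ×ˢ t = univ ×ˢ t \ s ×ˢ t := by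
    rw [prod_sdiff_prod, sdiff_self, prod_empty, empty_union, compl_eq_univ_sdiff]
  rw [hdiff, measure_sdiff (prod_mono (subset_univ s) subset_rfl) (hs.prod ht).nullMeasurableSet
    (hst ▸ hfin), h.measure_univ_prod ht, hst, tsub_self]

end IsCoupling

lemma IsMonotoneCoupling.measure_Iic_prod_compl_union_compl_prod_Iic_eq_zero
    {γ : Measure (ℝ × ℝ)} {μ ν : Measure ℝ} (h : IsMonotoneCoupling γ μ ν) {c d : ℝ}
    (hcd : μ (Iic c) = ν (Iic d)) (hfin : μ (Iic c) ≠ ∞) :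
    γ (Iic c ×ˢ (Iic d)ᶜ ∪ (Iic c)ᶜ ×ˢ Iic d) = 0 := by
  obtain ⟨hcoup, hmin⟩ := h
  have hcorner : γ (Iic c ×ˢ Iic d) = μ (Iic c) := by rw [hmin, hcd, min_self]
  exact measure_union_null
    (hcoup.measure_prod_compl_eq_zero measurableSet_Iic measurableSet_Iic hcorner hfin)
    (hcoup.measure_compl_prod_eq_zero measurableSet_Iic measurableSet_Iic (hcorner.trans hcd)
      (hcd ▸ hfin))

lemma SignedMeasure.totalVariation_apply_eq_ofReal_abs {X : Type*} [MeasurableSpace X]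
    {a : SignedMeasure X} {s : Set X} (hs : MeasurableSet s)
    (h : a.toJordanDecomposition.negPart s = 0 ∨ a.toJordanDecomposition.posPart s = 0) :
    a.totalVariation s = ENNReal.ofReal |a s| := by
  rw [a.apply_eq_posPart_real_sub_negPart_real hs, SignedMeasure.totalVariation,
    Measure.add_apply]
  rcases h with h | h <;> simp [measureReal_def, h]

section sigInterval

variable {n : ℕ} {p q : ℕ → ℝ} {i : ℕ} {x y : ℝ}

lemma measurableSet_sigInterval (n : ℕ) (p : ℕ → ℝ) (i : ℕ) :
    MeasurableSet (sigInterval n p i) := by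
  unfold sigInterval
  split_ifs <;> measurability

lemma mem_sigInterval_iff :
    x ∈ sigInterval n p i ↔ (i = 1 ∨ p (i - 1) < x) ∧ (i = n ∨ x ≤ p i) := by
  unfold sigInterval
  split_ifs <;> simp_all

lemma sigInterval_one (hn : n ≠ 1) : sigInterval n p 1 = Iic (p 1) := by
  ext x
  simp [mem_sigInterval_iff, hn.symm]

lemma sigInterval_succ (hi : 1 ≤ i) (hn : i + 1 ≠ n) :
    sigInterval n p (i + 1) = Ioc (p i) (p (i + 1)) := by
  ext x
  simp [mem_sigInterval_iff, hn, Nat.one_le_iff_ne_zero.mp hi]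

lemma exists_mem_sigInterval (hn : 1 ≤ n) (p : ℕ → ℝ) (x : ℝ) :
    ∃ i ∈ Finset.Icc 1 n, x ∈ sigInterval n p i := by
  classical
  have hex : ∃ j, j + 1 = n ∨ x ≤ p (j + 1) := ⟨n - 1, Or.inl (by omega)⟩
  refine ⟨Nat.find hex + 1, ?_, mem_sigInterval_iff.mpr ⟨?_, Nat.find_spec hex⟩⟩
  · have : Nat.find hex ≤ n - 1 := Nat.find_le (Or.inl (by omega))
    simp only [Finset.mem_Icc]
    omega
  · rcases h : Nat.find hex with _ | k
    · exact Or.inl rfl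
    · have hk := Nat.find_min hex (show k < Nat.find hex by omega)
      exact Or.inr (not_le.mp (not_or.mp hk).2)

lemma mem_sigInterval_iff_of_forall_le_iff (h : ∀ j ∈ Finset.Ico 1 n, (x ≤ p j ↔ y ≤ q j))
    (hi : i ∈ Finset.Icc 1 n) : x ∈ sigInterval n p i ↔ y ∈ sigInterval n q i := by
  rw [Finset.mem_Icc] at hi
  have hlower : (i = 1 ∨ p (i - 1) < x) ↔ (i = 1 ∨ q (i - 1) < y) := by
    by_cases hi1 : i = 1
    · simp [hi1]
    · simp only [hi1, false_or, ← not_le, h (i - 1) (Finset.mem_Ico.mpr ⟨by omega, by omega⟩)]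
  have hupper : (i = n ∨ x ≤ p i) ↔ (i = n ∨ y ≤ q i) := by
    by_cases hin : i = n
    · simp [hin]
    · simp only [hin, false_or, h i (Finset.mem_Ico.mpr ⟨hi.1, by omega⟩)]
  rw [mem_sigInterval_iff, mem_sigInterval_iff, hlower, hupper]

lemma compl_iUnion_sigInterval_prod_subset (hn : 1 ≤ n) :
    (⋃ i ∈ Finset.Icc 1 n, sigInterval n p i ×ˢ sigInterval n q i)ᶜ ⊆
      ⋃ i ∈ Finset.Ico 1 n, (Iic (p i) ×ˢ (Iic (q i))ᶜ ∪ (Iic (p i))ᶜ ×ˢ Iic (q i)) := by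
  intro xy hxy
  by_contra hoff
  have hle : ∀ j ∈ Finset.Ico 1 n, (xy.1 ≤ p j ↔ xy.2 ≤ q j) := by
    intro j hj
    by_contra hne
    exact hoff (mem_biUnion hj (by simp only [mem_union, mem_prod, mem_Iic, mem_compl_iff]; tauto))
  obtain ⟨i, hi, hx⟩ := exists_mem_sigInterval hn p xy.1
  exact hxy (mem_biUnion hi ⟨hx, (mem_sigInterval_iff_of_forall_le_iff hle hi).mp hx⟩)

end sigInterval

namespace HasSignature

variable {a : SignedMeasure ℝ} {n : ℕ} {p z : ℕ → ℝ}

lemma totalVariation_sigInterval (ha : HasSignature a n p z) {i : ℕ} (hi1 : 1 ≤ i)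
    (hin : i ≤ n) : a.totalVariation (sigInterval n p i) = ENNReal.ofReal |z i| := by
  obtain ⟨-, -, hz, -, s, -, hs⟩ := ha
  rw [hz i hi1 hin]
  refine SignedMeasure.totalVariation_apply_eq_ofReal_abs (measurableSet_sigInterval n p i) ?_
  have hpart := hs i hi1 hin
  cases hsi : s i <;> simp only [hsi] at hpart
  · exact Or.inr hpart
  · exact Or.inl hpart

lemma totalVariation_Iic (ha : HasSignature a n p z) {i : ℕ} (hi1 : 1 ≤ i) (hin : i < n) :
    a.totalVariation (Iic (p i)) = ∑ j ∈ Finset.Icc 1 i, ENNReal.ofReal |z j| := by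
  induction i, hi1 using Nat.le_induction with
  | base =>
    rw [← sigInterval_one (p := p) (show n ≠ 1 by omega),
      ha.totalVariation_sigInterval le_rfl (by omega)]
    simp
  | succ i hi1 ih =>
    have hsplit : Iic (p (i + 1)) = Iic (p i) ∪ sigInterval n p (i + 1) := by
      rw [sigInterval_succ hi1 (by omega), Iic_union_Ioc_eq_Iic (ha.2.1 i hi1 (by omega)).le]
    rw [hsplit, measure_union (Iic_disjoint_Ioc le_rfl |>.mono_right
        (sigInterval_succ hi1 (by omega)).subset) (measurableSet_sigInterval n p (i + 1)),
      ih (by omega), ha.totalVariation_sigInterval (by omega) (by omega),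
      Finset.sum_Icc_succ_top (by omega)]

end HasSignature

/-- If the finite signed measures `a` and `b` on `ℝ` have the same
finite-length signature `(z₁,…,z_n)` with signature intervals `(p_{i-1}, pᵢ]` and
`(q_{i-1}, qᵢ]`, and `α := ‖a‖`, `β := ‖b‖` are their total variations, then the
monotone coupling `γ` between `α` and `β` is concentrated on
`⋃_{i=1}^n (p_{i-1}, pᵢ] × (q_{i-1}, qᵢ]`. -/
theorem stmt11 (a b : SignedMeasure ℝ)
    (n : ℕ) (p q : ℕ → ℝ) (z : ℕ → ℝ)
    (ha : HasSignature a n p z) (hb : HasSignature b n q z)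
    (γ : Measure (ℝ × ℝ))
    (hγ : IsMonotoneCoupling γ a.totalVariation b.totalVariation) :
    γ ((⋃ i ∈ Finset.Icc 1 n, sigInterval n p i ×ˢ sigInterval n q i)ᶜ) = 0 := by
  have hoff : ∀ i ∈ Finset.Ico 1 n,
      γ (Iic (p i) ×ˢ (Iic (q i))ᶜ ∪ (Iic (p i))ᶜ ×ˢ Iic (q i)) = 0 := by
    intro i hi
    obtain ⟨hi1, hin⟩ := Finset.mem_Ico.mp hi
    refine hγ.measure_Iic_prod_compl_union_compl_prod_Iic_eq_zero ?_ (measure_ne_top _ _)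
    rw [ha.totalVariation_Iic hi1 hin, hb.totalVariation_Iic hi1 hin]
  exact measure_mono_null (compl_iUnion_sigInterval_prod_subset ha.1)
    ((measure_biUnion_null_iff (Finset.Ico 1 n).countable_toSet).mpr hoff)
end
end
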